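/- In a finite-horizon MDP with horizon H and rewards bounded in [0, 1], if the expected KL divergence between the expert ξ* and policy π under the expert's state-action visitation satisfies E_{d^{ξ*}}[ KL(ξ*(·|s) ‖ π(·|s)) ] ≤ ε, then Reg(π) = V(ξ*) − V(π) ≤ 2√2 · H² · √ε. -/

import Mathlib

open Finset

/-- The state distribution at each step of a finite-horizon MDP with initial
distribution `ρ`, transition kernel `P` and (time-dependent) policy `π`. -/
noncomputable def stateDist {S A : Type*} [Fintype S] [Fintype A]
    (ρ : S → ℝ) (P : S → A → S → ℝ) (π : ℕ → S → A → ℝ) : ℕ → S → ℝ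
  | 0 => ρ
  | (t + 1) => fun s' => ∑ s, ∑ a, stateDist ρ P π t s * π t s a * P s a s'

/-- The expected cumulative reward of policy `π` over horizon `H`. -/
noncomputable def mdpValue {S A : Type*} [Fintype S] [Fintype A]
    (ρ : S → ℝ) (P : S → A → S → ℝ) (π : ℕ → S → A → ℝ)
    (r : ℕ → S → A → ℝ) (H : ℕ) : ℝ :=
  ∑ t ∈ Finset.range H, ∑ s, ∑ a, stateDist ρ P π t s * π t s a * r t s a

/-- Pointwise lower bound on the KL integrand. -/
lemma stmt8_klterm (p q : ℝ) (hp : 0 ≤ p) (hq : 0 < q) :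
    (p - q) + (p - q)^2 / (2*(p+q)) ≤ p * Real.log (p / q) := by
  rcases hp.eq_or_lt with h | hp'
  · rw [← h]
    have : (0 - q) + (0 - q)^2 / (2*(0+q)) = -q/2 := by field_simp; ring
    simp only [zero_mul]
    rw [this]; linarith
  · set u := Real.sqrt p with hu
    set v := Real.sqrt q with hv
    have hu0 : 0 < u := Real.sqrt_pos.2 hp'
    have hv0 : 0 < v := Real.sqrt_pos.2 hq
    have hpu : p = u^2 := (Real.sq_sqrt hp).symm
    have hqv : q = v^2 := (Real.sq_sqrt hq.le).symm
    have hlog : Real.log (v/u) ≤ v/u - 1 := Real.log_le_sub_one_of_pos (by positivity)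
    have hlog2 : 1 - v/u ≤ Real.log (u/v) := by
      have : Real.log (u/v) = - Real.log (v/u) := by
        rw [← Real.log_inv]; congr 1; field_simp
      rw [this]; linarith
    have hlogpq : Real.log (p/q) = 2 * Real.log (u/v) := by
      rw [hpu, hqv, ← div_pow, Real.log_pow]
      push_cast; ring
    have key : 2*u^2 - 2*u*v ≤ p * Real.log (p/q) := by
      rw [hlogpq, hpu]
      have := mul_le_mul_of_nonneg_left hlog2 (by positivity : (0:ℝ) ≤ 2*u^2)
      calc 2*u^2 - 2*u*v = 2*u^2 * (1 - v/u) := by field_simp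
        _ ≤ 2*u^2 * Real.log (u/v) := this
        _ = u^2 * (2 * Real.log (u/v)) := by ring
    have hdiv : (p - q)^2 / (2*(p+q)) ≤ (u - v)^2 := by
      rw [div_le_iff₀ (by positivity)]
      rw [hpu, hqv]
      nlinarith [sq_nonneg ((u-v)*(u-v)), sq_nonneg (u-v), sq_nonneg (u+v)]
    nlinarith [key, hdiv]

/-- KL nonnegativity and a weak Pinsker inequality `‖p − q‖₁ ≤ 2√KL(p‖q)`. -/
lemma stmt8_pinsker {A : Type*} [Fintype A] (p q : A → ℝ) (hp : ∀ a, 0 ≤ p a)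
    (hq : ∀ a, 0 < q a) (hp1 : (∑ a, p a) = 1) (hq1 : (∑ a, q a) = 1) :
    0 ≤ ∑ a, p a * Real.log (p a / q a) ∧
    ∑ a, |p a - q a| ≤ 2 * Real.sqrt (∑ a, p a * Real.log (p a / q a)) := by
  set K := ∑ a, p a * Real.log (p a / q a) with hK
  have hT : ∑ a, ((p a - q a) + (p a - q a)^2 / (2*(p a + q a))) ≤ K :=
    Finset.sum_le_sum fun a _ => stmt8_klterm (p a) (q a) (hp a) (hq a)
  rw [Finset.sum_add_distrib] at hT
  have hzero : ∑ a, (p a - q a) = 0 := by rw [Finset.sum_sub_distrib, hp1, hq1]; ring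
  have hTK : ∑ a, (p a - q a)^2 / (2*(p a + q a)) ≤ K := by linarith
  have hTnn : 0 ≤ ∑ a, (p a - q a)^2 / (2*(p a + q a)) :=
    Finset.sum_nonneg fun a _ => div_nonneg (sq_nonneg _)
      (by have h1 := hp a; have h2 := hq a; linarith)
  have hKnn : 0 ≤ K := le_trans hTnn hTK
  refine ⟨hKnn, ?_⟩
  have hcs : (∑ a, |p a - q a|) ^ 2 ≤
      (∑ a, 2*(p a + q a)) * ∑ a, (p a - q a)^2 / (2*(p a + q a)) := by
    refine Finset.sum_sq_le_sum_mul_sum_of_sq_eq_mul _ (fun a _ => ?_) (fun a _ => ?_)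
      (fun a _ => ?_)
    · have h1 := hp a; have h2 := hq a; linarith
    · exact div_nonneg (sq_nonneg _) (by have h1 := hp a; have h2 := hq a; linarith)
    · have h1 := hp a; have h2 := hq a
      rw [sq_abs, mul_div_cancel₀ _ (by linarith : 2*(p a + q a) ≠ 0)]
  have hsum : (∑ a, 2*(p a + q a)) = 4 := by
    rw [← Finset.mul_sum, Finset.sum_add_distrib, hp1, hq1]; norm_num
  rw [hsum] at hcs
  have h4 : (∑ a, |p a - q a|) ^ 2 ≤ 4 * K := le_trans hcs (by linarith)
  have habs : 0 ≤ ∑ a, |p a - q a| := Finset.sum_nonneg fun a _ => abs_nonneg _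
  calc ∑ a, |p a - q a| = Real.sqrt ((∑ a, |p a - q a|)^2) := (Real.sqrt_sq habs).symm
    _ ≤ Real.sqrt (4 * K) := Real.sqrt_le_sqrt h4
    _ = 2 * Real.sqrt K := by
        rw [Real.sqrt_mul (by norm_num), show (4:ℝ) = 2^2 by norm_num,
          Real.sqrt_sq (by norm_num)]

/-- Weighted Cauchy–Schwarz / Jensen: `∑ d √K ≤ √(∑ d K)` when `∑ d = 1`. -/
lemma stmt8_wcs {S : Type*} [Fintype S] (d K : S → ℝ) (hd : ∀ s, 0 ≤ d s)
    (hK : ∀ s, 0 ≤ K s) (hd1 : (∑ s, d s) = 1) :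
    ∑ s, d s * Real.sqrt (K s) ≤ Real.sqrt (∑ s, d s * K s) := by
  have hcs : (∑ s, d s * Real.sqrt (K s)) ^ 2 ≤ (∑ s, d s) * ∑ s, d s * K s := by
    refine Finset.sum_sq_le_sum_mul_sum_of_sq_eq_mul _ (fun s _ => hd s)
      (fun s _ => mul_nonneg (hd s) (hK s)) (fun s _ => ?_)
    rw [mul_pow, Real.sq_sqrt (hK s)]; ring
  rw [hd1, one_mul] at hcs
  have h0 : 0 ≤ ∑ s, d s * Real.sqrt (K s) :=
    Finset.sum_nonneg fun s _ => mul_nonneg (hd s) (Real.sqrt_nonneg _)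
  calc ∑ s, d s * Real.sqrt (K s) = Real.sqrt ((∑ s, d s * Real.sqrt (K s))^2) :=
        (Real.sqrt_sq h0).symm
    _ ≤ _ := Real.sqrt_le_sqrt hcs

lemma stmt8_stateDist_nonneg {S A : Type*} [Fintype S] [Fintype A]
    (ρ : S → ℝ) (hρ0 : ∀ s, 0 ≤ ρ s) (P : S → A → S → ℝ) (hP0 : ∀ s a s', 0 ≤ P s a s')
    (π : ℕ → S → A → ℝ) (hπ0 : ∀ t s a, 0 ≤ π t s a) :
    ∀ t s, 0 ≤ stateDist ρ P π t s := by
  intro t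
  induction t with
  | zero => exact hρ0
  | succ t ih =>
    intro s'
    exact Finset.sum_nonneg fun s _ => Finset.sum_nonneg fun a _ =>
      mul_nonneg (mul_nonneg (ih s) (hπ0 t s a)) (hP0 s a s')

lemma stmt8_stateDist_sum_one {S A : Type*} [Fintype S] [Fintype A]
    (ρ : S → ℝ) (hρ1 : (∑ s, ρ s) = 1) (P : S → A → S → ℝ)
    (hP1 : ∀ s a, (∑ s', P s a s') = 1)
    (π : ℕ → S → A → ℝ) (hπ1 : ∀ t s, (∑ a, π t s a) = 1) :
    ∀ t, (∑ s, stateDist ρ P π t s) = 1 := by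
  intro t
  induction t with
  | zero => exact hρ1
  | succ t ih =>
    show (∑ s', ∑ s, ∑ a, stateDist ρ P π t s * π t s a * P s a s') = 1
    rw [Finset.sum_comm]
    calc (∑ s, ∑ s', ∑ a, stateDist ρ P π t s * π t s a * P s a s')
        = ∑ s, ∑ a, ∑ s', stateDist ρ P π t s * π t s a * P s a s' :=
          Finset.sum_congr rfl fun s _ => Finset.sum_comm
      _ = ∑ s, ∑ a, stateDist ρ P π t s * π t s a := by
          refine Finset.sum_congr rfl fun s _ => Finset.sum_congr rfl fun a _ => ?_
          rw [← Finset.mul_sum, hP1, mul_one]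
      _ = ∑ s, stateDist ρ P π t s := by
          refine Finset.sum_congr rfl fun s _ => ?_
          rw [← Finset.mul_sum, hπ1, mul_one]
      _ = 1 := ih

/-- In a finite-horizon MDP with horizon `H` and rewards in
`[0,1]`, if the expected KL divergence between the expert `ξ` and the policy
`π` under the expert's state visitation is at most `ε`, then
`Reg(π) = V(ξ) − V(π) ≤ 2√2·H²·√ε`. -/
theorem stmt_8 {S A : Type*} [Fintype S] [Fintype A]
    (ρ : S → ℝ) (hρ0 : ∀ s, 0 ≤ ρ s) (hρ1 : (∑ s, ρ s) = 1)
    (P : S → A → S → ℝ) (hP0 : ∀ s a s', 0 ≤ P s a s')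
    (hP1 : ∀ s a, (∑ s', P s a s') = 1)
    (r : ℕ → S → A → ℝ) (hr : ∀ t s a, r t s a ∈ Set.Icc (0:ℝ) 1)
    (ξ π : ℕ → S → A → ℝ)
    (hξ0 : ∀ t s a, 0 ≤ ξ t s a) (hξ1 : ∀ t s, (∑ a, ξ t s a) = 1)
    (hπ0 : ∀ t s a, 0 < π t s a) (hπ1 : ∀ t s, (∑ a, π t s a) = 1)
    (H : ℕ) (ε : ℝ) (hε : 0 ≤ ε)
    (hKL : (1 / (H : ℝ)) * ∑ t ∈ Finset.range H, ∑ s,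
        stateDist ρ P ξ t s *
          (∑ a, ξ t s a * Real.log (ξ t s a / π t s a)) ≤ ε) :
    mdpValue ρ P ξ r H - mdpValue ρ P π r H ≤
      2 * Real.sqrt 2 * (H : ℝ) ^ 2 * Real.sqrt ε := by
  rcases Nat.eq_zero_or_pos H with hH | hH
  · subst hH
    simp [mdpValue]
  have hHpos : (0:ℝ) < H := by exact_mod_cast hH
  have hπ0' : ∀ t s a, 0 ≤ π t s a := fun t s a => (hπ0 t s a).le
  have hd0 : ∀ t s, 0 ≤ stateDist ρ P ξ t s :=
    stmt8_stateDist_nonneg ρ hρ0 P hP0 ξ hξ0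
  have hd1 : ∀ t, (∑ s, stateDist ρ P ξ t s) = 1 :=
    stmt8_stateDist_sum_one ρ hρ1 P hP1 ξ hξ1
  -- per-state KL, and its properties
  set KL : ℕ → S → ℝ := fun t s => ∑ a, ξ t s a * Real.log (ξ t s a / π t s a) with hKLdef
  have hKLnn : ∀ t s, 0 ≤ KL t s := fun t s =>
    (stmt8_pinsker (ξ t s) (π t s) (hξ0 t s) (hπ0 t s) (hξ1 t s) (hπ1 t s)).1
  have htv : ∀ t s, (∑ a, |ξ t s a - π t s a|) ≤ 2 * Real.sqrt (KL t s) := fun t s =>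
    (stmt8_pinsker (ξ t s) (π t s) (hξ0 t s) (hπ0 t s) (hξ1 t s) (hπ1 t s)).2
  set KK : ℕ → ℝ := fun t => ∑ s, stateDist ρ P ξ t s * KL t s with hKK
  have hKKnn : ∀ t, 0 ≤ KK t := fun t =>
    Finset.sum_nonneg fun s _ => mul_nonneg (hd0 t s) (hKLnn t s)
  set gg : ℕ → ℝ := fun t => ∑ s, stateDist ρ P ξ t s * ∑ a, |ξ t s a - π t s a| with hgg
  have hggnn : ∀ t, 0 ≤ gg t := fun t =>
    Finset.sum_nonneg fun s _ => mul_nonneg (hd0 t s)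
      (Finset.sum_nonneg fun a _ => abs_nonneg _)
  have hgK : ∀ t, gg t ≤ 2 * Real.sqrt (KK t) := by
    intro t
    have h1 : gg t ≤ ∑ s, stateDist ρ P ξ t s * (2 * Real.sqrt (KL t s)) :=
      Finset.sum_le_sum fun s _ => mul_le_mul_of_nonneg_left (htv t s) (hd0 t s)
    have h2 : (∑ s, stateDist ρ P ξ t s * (2 * Real.sqrt (KL t s)))
        = 2 * ∑ s, stateDist ρ P ξ t s * Real.sqrt (KL t s) := by
      rw [Finset.mul_sum]; exact Finset.sum_congr rfl fun s _ => by ring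
    have h3 : (∑ s, stateDist ρ P ξ t s * Real.sqrt (KL t s))
        ≤ Real.sqrt (KK t) :=
      stmt8_wcs _ _ (hd0 t) (hKLnn t) (hd1 t)
    calc gg t ≤ _ := h1
      _ = _ := h2
      _ ≤ 2 * Real.sqrt (KK t) := by linarith
  set DD : ℕ → ℝ := fun t => ∑ s, ∑ a,
    |stateDist ρ P ξ t s * ξ t s a - stateDist ρ P π t s * π t s a| with hDD
  set Δ : ℕ → ℝ := fun t => ∑ s, |stateDist ρ P ξ t s - stateDist ρ P π t s| with hΔ
  -- D t ≤ Δ t + g t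
  have hDle : ∀ t, DD t ≤ Δ t + gg t := by
    intro t
    have : Δ t + gg t = ∑ s, (|stateDist ρ P ξ t s - stateDist ρ P π t s|
        + stateDist ρ P ξ t s * ∑ a, |ξ t s a - π t s a|) := by
      rw [Finset.sum_add_distrib]
    rw [this]
    refine Finset.sum_le_sum fun s _ => ?_
    have hper : ∀ a, |stateDist ρ P ξ t s * ξ t s a - stateDist ρ P π t s * π t s a|
        ≤ |stateDist ρ P ξ t s - stateDist ρ P π t s| * π t s a
          + stateDist ρ P ξ t s * |ξ t s a - π t s a| := by
      intro a
      have heq : stateDist ρ P ξ t s * ξ t s a - stateDist ρ P π t s * π t s a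
          = (stateDist ρ P ξ t s - stateDist ρ P π t s) * π t s a
            + stateDist ρ P ξ t s * (ξ t s a - π t s a) := by ring
      rw [heq]
      calc |_ + _| ≤ |(stateDist ρ P ξ t s - stateDist ρ P π t s) * π t s a|
            + |stateDist ρ P ξ t s * (ξ t s a - π t s a)| := abs_add_le _ _
        _ = |stateDist ρ P ξ t s - stateDist ρ P π t s| * π t s a
            + stateDist ρ P ξ t s * |ξ t s a - π t s a| := by
            rw [abs_mul, abs_mul, abs_of_nonneg (hπ0' t s a), abs_of_nonneg (hd0 t s)]
    calc (∑ a, |stateDist ρ P ξ t s * ξ t s a - stateDist ρ P π t s * π t s a|)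
        ≤ ∑ a, (|stateDist ρ P ξ t s - stateDist ρ P π t s| * π t s a
            + stateDist ρ P ξ t s * |ξ t s a - π t s a|) :=
          Finset.sum_le_sum fun a _ => hper a
      _ = |stateDist ρ P ξ t s - stateDist ρ P π t s|
            + stateDist ρ P ξ t s * ∑ a, |ξ t s a - π t s a| := by
          rw [Finset.sum_add_distrib, ← Finset.mul_sum, ← Finset.mul_sum, hπ1, mul_one]
  -- Δ (t+1) ≤ D t
  have hΔstep : ∀ t, Δ (t+1) ≤ DD t := by
    intro t
    have hexp : Δ (t+1) = ∑ s', |∑ s, ∑ a,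
        (stateDist ρ P ξ t s * ξ t s a - stateDist ρ P π t s * π t s a) * P s a s'| := by
      refine Finset.sum_congr rfl fun s' _ => ?_
      congr 1
      show (∑ s, ∑ a, stateDist ρ P ξ t s * ξ t s a * P s a s')
          - (∑ s, ∑ a, stateDist ρ P π t s * π t s a * P s a s') = _
      rw [← Finset.sum_sub_distrib]
      refine Finset.sum_congr rfl fun s _ => ?_
      rw [← Finset.sum_sub_distrib]
      refine Finset.sum_congr rfl fun a _ => ?_
      ring
    rw [hexp]
    calc (∑ s', |∑ s, ∑ a,
          (stateDist ρ P ξ t s * ξ t s a - stateDist ρ P π t s * π t s a) * P s a s'|)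
        ≤ ∑ s', ∑ s, ∑ a,
            |stateDist ρ P ξ t s * ξ t s a - stateDist ρ P π t s * π t s a| * P s a s' := by
          refine Finset.sum_le_sum fun s' _ => ?_
          calc |∑ s, ∑ a, _| ≤ ∑ s, |∑ a,
                (stateDist ρ P ξ t s * ξ t s a - stateDist ρ P π t s * π t s a) * P s a s'| :=
              Finset.abs_sum_le_sum_abs _ _
            _ ≤ ∑ s, ∑ a, |(stateDist ρ P ξ t s * ξ t s a
                  - stateDist ρ P π t s * π t s a) * P s a s'| :=
              Finset.sum_le_sum fun s _ => Finset.abs_sum_le_sum_abs _ _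
            _ = ∑ s, ∑ a, |stateDist ρ P ξ t s * ξ t s a
                  - stateDist ρ P π t s * π t s a| * P s a s' := by
              refine Finset.sum_congr rfl fun s _ => Finset.sum_congr rfl fun a _ => ?_
              rw [abs_mul, abs_of_nonneg (hP0 s a s')]
      _ = DD t := by
          rw [Finset.sum_comm]
          refine Finset.sum_congr rfl fun s _ => ?_
          rw [Finset.sum_comm]
          refine Finset.sum_congr rfl fun a _ => ?_
          rw [← Finset.mul_sum, hP1, mul_one]
  have hΔ0 : Δ 0 = 0 := by
    simp [hΔ, stateDist]
  -- Δ t ≤ ∑_{u<t} g u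
  have hΔle : ∀ t, Δ t ≤ ∑ u ∈ Finset.range t, gg u := by
    intro t
    induction t with
    | zero => simp [hΔ0]
    | succ t ih =>
      calc Δ (t+1) ≤ DD t := hΔstep t
        _ ≤ Δ t + gg t := hDle t
        _ ≤ (∑ u ∈ Finset.range t, gg u) + gg t := by linarith
        _ = ∑ u ∈ Finset.range (t+1), gg u := (Finset.sum_range_succ _ _).symm
  set G : ℝ := ∑ u ∈ Finset.range H, gg u with hG
  have hDG : ∀ t, t < H → DD t ≤ G := by
    intro t ht
    calc DD t ≤ Δ t + gg t := hDle t
      _ ≤ (∑ u ∈ Finset.range t, gg u) + gg t := by linarith [hΔle t]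
      _ = ∑ u ∈ Finset.range (t+1), gg u := (Finset.sum_range_succ _ _).symm
      _ ≤ G := Finset.sum_le_sum_of_subset_of_nonneg
          (Finset.range_subset_range.2 ht) (fun u _ _ => hggnn u)
  -- value difference ≤ ∑ D
  have hval : mdpValue ρ P ξ r H - mdpValue ρ P π r H ≤ ∑ t ∈ Finset.range H, DD t := by
    show (∑ t ∈ Finset.range H, ∑ s, ∑ a, stateDist ρ P ξ t s * ξ t s a * r t s a)
        - (∑ t ∈ Finset.range H, ∑ s, ∑ a, stateDist ρ P π t s * π t s a * r t s a) ≤ _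
    rw [← Finset.sum_sub_distrib]
    refine Finset.sum_le_sum fun t _ => ?_
    rw [← Finset.sum_sub_distrib]
    refine Finset.sum_le_sum fun s _ => ?_
    rw [← Finset.sum_sub_distrib]
    refine Finset.sum_le_sum fun a _ => ?_
    have hr0 := (hr t s a).1
    have hr1 := (hr t s a).2
    have heq : stateDist ρ P ξ t s * ξ t s a * r t s a
        - stateDist ρ P π t s * π t s a * r t s a
        = (stateDist ρ P ξ t s * ξ t s a - stateDist ρ P π t s * π t s a) * r t s a := by ring
    rw [heq]
    calc (stateDist ρ P ξ t s * ξ t s a - stateDist ρ P π t s * π t s a) * r t s a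
        ≤ |(stateDist ρ P ξ t s * ξ t s a - stateDist ρ P π t s * π t s a) * r t s a| :=
          le_abs_self _
      _ = |stateDist ρ P ξ t s * ξ t s a - stateDist ρ P π t s * π t s a| * |r t s a| :=
          abs_mul _ _
      _ ≤ |stateDist ρ P ξ t s * ξ t s a - stateDist ρ P π t s * π t s a| * 1 := by
          refine mul_le_mul_of_nonneg_left ?_ (abs_nonneg _)
          rw [abs_of_nonneg hr0]; exact hr1
      _ = _ := mul_one _
  have hsumD : (∑ t ∈ Finset.range H, DD t) ≤ (H : ℝ) * G := by
    calc (∑ t ∈ Finset.range H, DD t) ≤ ∑ t ∈ Finset.range H, G :=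
        Finset.sum_le_sum fun t ht => hDG t (Finset.mem_range.1 ht)
      _ = (H : ℝ) * G := by rw [Finset.sum_const, Finset.card_range, nsmul_eq_mul]
  -- ∑ K ≤ H ε
  have hKsum : (∑ t ∈ Finset.range H, KK t) ≤ (H : ℝ) * ε := by
    have := hKL
    rw [one_div, inv_mul_le_iff₀ hHpos] at this
    calc (∑ t ∈ Finset.range H, KK t)
        = ∑ t ∈ Finset.range H, ∑ s, stateDist ρ P ξ t s *
            (∑ a, ξ t s a * Real.log (ξ t s a / π t s a)) := rfl
      _ ≤ (H : ℝ) * ε := this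
  -- G ≤ 2 H √ε
  have hGbound : G ≤ 2 * (H : ℝ) * Real.sqrt ε := by
    have h1 : G ≤ ∑ t ∈ Finset.range H, 2 * Real.sqrt (KK t) :=
      Finset.sum_le_sum fun t _ => hgK t
    have h2 : (∑ t ∈ Finset.range H, 2 * Real.sqrt (KK t))
        = 2 * ∑ t ∈ Finset.range H, Real.sqrt (KK t) := by
      rw [Finset.mul_sum]
    have hcs : (∑ t ∈ Finset.range H, Real.sqrt (KK t)) ^ 2
        ≤ (∑ t ∈ Finset.range H, (1:ℝ)) * ∑ t ∈ Finset.range H, KK t := by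
      refine Finset.sum_sq_le_sum_mul_sum_of_sq_eq_mul _ (fun t _ => zero_le_one)
        (fun t _ => hKKnn t) (fun t _ => ?_)
      rw [Real.sq_sqrt (hKKnn t), one_mul]
    rw [Finset.sum_const, Finset.card_range, nsmul_eq_mul, mul_one] at hcs
    have h3 : (∑ t ∈ Finset.range H, Real.sqrt (KK t))
        ≤ Real.sqrt ((H : ℝ) * ((H : ℝ) * ε)) := by
      have hnn : 0 ≤ ∑ t ∈ Finset.range H, Real.sqrt (KK t) :=
        Finset.sum_nonneg fun t _ => Real.sqrt_nonneg _
      calc (∑ t ∈ Finset.range H, Real.sqrt (KK t))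
          = Real.sqrt ((∑ t ∈ Finset.range H, Real.sqrt (KK t))^2) :=
            (Real.sqrt_sq hnn).symm
        _ ≤ Real.sqrt ((H : ℝ) * ((H : ℝ) * ε)) := by
            refine Real.sqrt_le_sqrt ?_
            calc (∑ t ∈ Finset.range H, Real.sqrt (KK t))^2
                ≤ (H : ℝ) * ∑ t ∈ Finset.range H, KK t := hcs
              _ ≤ (H : ℝ) * ((H : ℝ) * ε) :=
                  mul_le_mul_of_nonneg_left hKsum hHpos.le
    have h4 : Real.sqrt ((H : ℝ) * ((H : ℝ) * ε)) = (H : ℝ) * Real.sqrt ε := by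
      rw [← mul_assoc, show (H:ℝ) * (H:ℝ) = (H:ℝ)^2 by ring,
        Real.sqrt_mul (sq_nonneg _), Real.sqrt_sq hHpos.le]
    calc G ≤ ∑ t ∈ Finset.range H, 2 * Real.sqrt (KK t) := h1
      _ = 2 * ∑ t ∈ Finset.range H, Real.sqrt (KK t) := h2
      _ ≤ 2 * ((H : ℝ) * Real.sqrt ε) := by
          rw [← h4]; linarith [h3]
      _ = 2 * (H : ℝ) * Real.sqrt ε := by ring
  -- conclusion
  have hfinal : mdpValue ρ P ξ r H - mdpValue ρ P π r H
      ≤ 2 * (H : ℝ)^2 * Real.sqrt ε := by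
    calc mdpValue ρ P ξ r H - mdpValue ρ P π r H
        ≤ ∑ t ∈ Finset.range H, DD t := hval
      _ ≤ (H : ℝ) * G := hsumD
      _ ≤ (H : ℝ) * (2 * (H : ℝ) * Real.sqrt ε) :=
          mul_le_mul_of_nonneg_left hGbound hHpos.le
      _ = 2 * (H : ℝ)^2 * Real.sqrt ε := by ring
  have hsqrt2 : (1:ℝ) ≤ Real.sqrt 2 := by
    rw [show (1:ℝ) = Real.sqrt 1 by simp]
    exact Real.sqrt_le_sqrt (by norm_num)
  have hx : 0 ≤ (H : ℝ)^2 * Real.sqrt ε := by positivity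
  calc mdpValue ρ P ξ r H - mdpValue ρ P π r H
      ≤ 2 * (H : ℝ)^2 * Real.sqrt ε := hfinal
    _ ≤ 2 * Real.sqrt 2 * (H : ℝ)^2 * Real.sqrt ε := by nlinarith [hsqrt2, hx]
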